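/- If three points x, y, z on the round unit 2-sphere satisfy d(x,y) + d(y,z) + d(z,x) = 2π for the intrinsic geodesic distance (equivalently, distances summing to π on the sphere of radius 1/2 after rescaling), then x, y, z lie on a common great circle. -/

import Mathlib

/-!
If the three arcs have lengths `a + b + c = 2π`, then `cos c = cos (a + b)`, and this makes the
Gram determinant `1 + 2 cos a cos b cos c - cos² a - cos² b - cos² c` of `x, y, z` vanish.
So the three points are linearly dependent, and their span lies in a plane through the origin.
-/

/-- Intrinsic (geodesic) distance on the round unit 2-sphere in `ℝ³`:
`d(x,y) = arccos ⟪x,y⟫` for unit vectors `x, y`. -/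
noncomputable def unitSphereDist (x y : EuclideanSpace ℝ (Fin 3)) : ℝ :=
  Real.arccos (inner ℝ x y : ℝ)

open Module Real
open scoped InnerProductSpace

theorem Real.cos_sq_add_cos_sq_add_cos_sq_of_add_add_eq_two_pi {a b c : ℝ}
    (h : a + b + c = 2 * π) :
    cos a ^ 2 + cos b ^ 2 + cos c ^ 2 = 1 + 2 * cos a * cos b * cos c := by
  have hc : cos c = cos a * cos b - sin a * sin b := by
    rw [show c = -(a + b) + 2 * π by linarith, cos_add_two_pi, cos_neg, cos_add]
  rw [hc]
  linear_combination sin a ^ 2 * sin_sq_add_cos_sq b + (1 - cos b ^ 2) * sin_sq_add_cos_sq a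

theorem Submodule.exists_finrank_add_one_eq_of_lt_top {K V : Type*} [Field K] [AddCommGroup V]
    [Module K V] [FiniteDimensional K V] {p : Submodule K V} (hp : p < ⊤) :
    ∃ H : Submodule K V, p ≤ H ∧ finrank K H + 1 = finrank K V := by
  obtain ⟨f, hf, hpf⟩ := p.exists_le_ker_of_lt_top hp
  exact ⟨LinearMap.ker f, hpf, Module.Dual.finrank_ker_add_one_of_ne_zero hf⟩

theorem exists_finrank_add_one_eq_of_not_linearIndependent {K V ι : Type*} [Field K]
    [AddCommGroup V] [Module K V] [FiniteDimensional K V] [Fintype ι] {v : ι → V}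
    (hv : ¬LinearIndependent K v) (hcard : Fintype.card ι ≤ finrank K V) :
    ∃ H : Submodule K V, finrank K H + 1 = finrank K V ∧ ∀ i, v i ∈ H := by
  have hlt : Submodule.span K (Set.range v) < ⊤ := by
    refine Submodule.lt_top_of_finrank_lt_finrank ?_
    rw [linearIndependent_iff_card_eq_finrank_span] at hv
    have := finrank_range_le_card (R := K) v
    unfold Set.finrank at hv this
    omega
  obtain ⟨H, hspan, hH⟩ := Submodule.exists_finrank_add_one_eq_of_lt_top hlt
  exact ⟨H, hH, fun i => hspan (Submodule.subset_span (Set.mem_range_self i))⟩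

theorem det_gram_fin_three_of_norm_eq_one {E : Type*} [NormedAddCommGroup E]
    [InnerProductSpace ℝ E] {x y z : E} (hx : ‖x‖ = 1) (hy : ‖y‖ = 1) (hz : ‖z‖ = 1) :
    (Matrix.gram ℝ ![x, y, z]).det = 1 + 2 * ⟪x, y⟫_ℝ * ⟪y, z⟫_ℝ * ⟪z, x⟫_ℝ
      - ⟪x, y⟫_ℝ ^ 2 - ⟪y, z⟫_ℝ ^ 2 - ⟪z, x⟫_ℝ ^ 2 := by
  simp only [Matrix.det_fin_three, Matrix.gram_apply, Matrix.cons_val_zero, Matrix.cons_val_one,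
    Matrix.cons_val_two, Matrix.head_cons, Matrix.tail_cons, real_inner_self_eq_norm_sq, hx, hy, hz,
    real_inner_comm x y, real_inner_comm y z, real_inner_comm z x]
  ring

theorem not_linearIndependent_of_arccos_inner_add_add_eq_two_pi {E : Type*}
    [NormedAddCommGroup E] [InnerProductSpace ℝ E] {x y z : E}
    (hx : ‖x‖ = 1) (hy : ‖y‖ = 1) (hz : ‖z‖ = 1)
    (hsum : arccos ⟪x, y⟫_ℝ + arccos ⟪y, z⟫_ℝ + arccos ⟪z, x⟫_ℝ = 2 * π) :
    ¬LinearIndependent ℝ ![x, y, z] := by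
  have cos_arccos_inner {u v : E} (hu : ‖u‖ = 1) (hv : ‖v‖ = 1) :
      cos (arccos ⟪u, v⟫_ℝ) = ⟪u, v⟫_ℝ := by
    have := abs_real_inner_le_norm u v
    rw [hu, hv, one_mul] at this
    exact cos_arccos (neg_le_of_abs_le this) (le_of_abs_le this)
  rw [← Matrix.det_gram_ne_zero_iff_linearIndependent, not_not,
    det_gram_fin_three_of_norm_eq_one hx hy hz]
  have := Real.cos_sq_add_cos_sq_add_cos_sq_of_add_add_eq_two_pi hsum
  rw [cos_arccos_inner hx hy, cos_arccos_inner hy hz, cos_arccos_inner hz hx] at this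
  linear_combination -this

/-- If three points on the round unit 2-sphere have pairwise intrinsic distances summing
to `2π`, then they lie on a common great circle, i.e. in a common 2-dimensional linear
subspace of `ℝ³`. -/
theorem greatCircle_of_sum_dist_eq_two_pi (x y z : EuclideanSpace ℝ (Fin 3))
    (hx : ‖x‖ = 1) (hy : ‖y‖ = 1) (hz : ‖z‖ = 1)
    (hsum : unitSphereDist x y + unitSphereDist y z + unitSphereDist z x = 2 * Real.pi) :
    ∃ P : Submodule ℝ (EuclideanSpace ℝ (Fin 3)),
      Module.finrank ℝ P = 2 ∧ x ∈ P ∧ y ∈ P ∧ z ∈ P := by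
  obtain ⟨P, hP, hmem⟩ := exists_finrank_add_one_eq_of_not_linearIndependent
    (not_linearIndependent_of_arccos_inner_add_add_eq_two_pi hx hy hz hsum) (by simp)
  rw [finrank_euclideanSpace_fin] at hP
  exact ⟨P, by omega, hmem 0, hmem 1, hmem 2⟩
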